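/- arXiv:2007.06049 — 2 statements merged into one kernel-verified Lean document; each statement's English description precedes it below -/
import Mathlib

section
/- The expected gradient of the loss (1/τ)|δ(i)|^τ under PER sampling with importance weights equals the expected gradient under uniform sampling of the loss L(δ(i)) = (ηN/(τ+α−αβ))·|δ(i)|^(τ+α−αβ), where η = (min_j |δ(j)|^{αβ})/(∑_j |δ(j)|^α). Concretely, both expected gradients equal η · ∑_i sign(δ(i))·|δ(i)|^(τ+α−αβ−1). -/
/-! Since `p i ∝ |δ i| ^ α`, the unnormalised weight `(1 / (N p i)) ^ β` is a constant times
`|δ i| ^ (-α β)`; its maximum sits at the smallest `|δ j|`, so the normalised weight times the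
probability is `η |δ i| ^ (α - α β)`. Multiplying by the gradient `sign (δ i) |δ i| ^ (τ - 1)` adds
the exponents, which gives the gradient of the uniformly sampled loss with exponent `τ + α - α β`. -/

open Finset

theorem Finset.sup'_div_eq_div_inf' {ι : Type*} {s : Finset ι} (H : s.Nonempty) {f : ι → ℝ}
    {c : ℝ} (hc : 0 ≤ c) (hf : ∀ i ∈ s, 0 < f i) :
    s.sup' H (fun i => c / f i) = c / s.inf' H f := by
  obtain ⟨j, hj, hjf⟩ := s.exists_mem_eq_inf' H f
  rw [hjf]
  refine le_antisymm (sup'_le H _ fun i hi => ?_) (le_sup' (fun i => c / f i) hj)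
  exact div_le_div_of_nonneg_left hc (hf j hj) (hjf ▸ inf'_le f hi)

theorem Real.one_div_mul_rpow_div_rpow {n S x : ℝ} (hn : 0 < n) (hS : 0 < S) (hx : 0 < x)
    (α β : ℝ) : (1 / (n * (x ^ α / S))) ^ β = (S / n) ^ β / x ^ (α * β) := by
  have hxα : 0 < x ^ α := Real.rpow_pos_of_pos hx α
  rw [show 1 / (n * (x ^ α / S)) = S / n / x ^ α by field_simp,
    Real.div_rpow (by positivity) hxα.le, ← Real.rpow_mul hx.le]

theorem importanceWeight_mul_prob {ι : Type*} [Fintype ι] (H : (univ : Finset ι).Nonempty)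
    {n : ℝ} (hn : 0 < n) {δ : ι → ℝ} (hδ : ∀ i, δ i ≠ 0) {α β η : ℝ} {p w : ι → ℝ}
    (hp : ∀ i, p i = |δ i| ^ α / ∑ j, |δ j| ^ α)
    (hw : ∀ i, w i = (1 / (n * p i)) ^ β / univ.sup' H (fun j => (1 / (n * p j)) ^ β))
    (hη : η = univ.inf' H (fun j => |δ j| ^ (α * β)) / ∑ j, |δ j| ^ α) (i : ι) :
    w i * p i = η * |δ i| ^ (α - α * β) := by
  have hδpos : ∀ i, 0 < |δ i| := fun i => abs_pos.2 (hδ i)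
  set S := ∑ j, |δ j| ^ α
  have hS : 0 < S := sum_pos (fun j _ => Real.rpow_pos_of_pos (hδpos j) α) H
  have hweight : ∀ j, (1 / (n * p j)) ^ β = (S / n) ^ β / |δ j| ^ (α * β) := fun j => by
    rw [hp j, Real.one_div_mul_rpow_div_rpow hn hS (hδpos j)]
  have hsup : univ.sup' H (fun j => (1 / (n * p j)) ^ β)
      = (S / n) ^ β / univ.inf' H (fun j => |δ j| ^ (α * β)) := by
    simp_rw [hweight]
    exact sup'_div_eq_div_inf' H (by positivity) fun j _ => Real.rpow_pos_of_pos (hδpos j) _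
  rw [hw i, hsup, hweight i, hp i, hη, Real.rpow_sub (hδpos i)]
  field_simp

theorem stmt4_general (N : ℕ) (hN : 0 < N) (δ : Fin N → ℝ) (hδ : ∀ i, δ i ≠ 0)
    (τ α β : ℝ)
    (p w : Fin N → ℝ)
    (hp : ∀ i, p i = |δ i| ^ α / ∑ j, |δ j| ^ α)
    (hw : ∀ i, w i = (1 / ((N : ℝ) * p i)) ^ β
        / (Finset.univ.sup' (Finset.univ_nonempty_iff.mpr (Fin.pos_iff_nonempty.mp hN))
            (fun j => (1 / ((N : ℝ) * p j)) ^ β)))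
    (η : ℝ)
    (hη : η = (Finset.univ.inf' (Finset.univ_nonempty_iff.mpr (Fin.pos_iff_nonempty.mp hN))
        (fun j => |δ j| ^ (α * β))) / ∑ j, |δ j| ^ α) :
    (∑ i, w i * p i * (Real.sign (δ i) * |δ i| ^ (τ - 1))
        = η * ∑ i, Real.sign (δ i) * |δ i| ^ (τ + α - α * β - 1))
    ∧ ((1 / (N : ℝ)) * ∑ i, η * (N : ℝ) * (Real.sign (δ i) * |δ i| ^ (τ + α - α * β - 1))
        = η * ∑ i, Real.sign (δ i) * |δ i| ^ (τ + α - α * β - 1)) := by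
  have hNpos : (0 : ℝ) < N := Nat.cast_pos.2 hN
  constructor
  · rw [mul_sum]
    refine sum_congr rfl fun i _ => ?_
    have hexp : |δ i| ^ (τ + α - α * β - 1) = |δ i| ^ (α - α * β) * |δ i| ^ (τ - 1) := by
      rw [← Real.rpow_add (abs_pos.2 (hδ i))]
      ring_nf
    rw [importanceWeight_mul_prob _ hNpos hδ hp hw hη, hexp]
    ring
  · rw [← mul_sum]
    field_simp

theorem stmt4 (N : ℕ) (hN : 0 < N) (δ : Fin N → ℝ) (hδ : ∀ i, δ i ≠ 0)
    (τ α β : ℝ) (hτ : 0 < τ) (hα0 : 0 < α) (hα1 : α ≤ 1) (hβ0 : 0 ≤ β) (hβ1 : β ≤ 1)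
    (he : 0 < τ + α - α * β)
    (p w : Fin N → ℝ)
    (hp : ∀ i, p i = |δ i| ^ α / ∑ j, |δ j| ^ α)
    (hw : ∀ i, w i = (1 / ((N : ℝ) * p i)) ^ β
        / (Finset.univ.sup' (Finset.univ_nonempty_iff.mpr (Fin.pos_iff_nonempty.mp hN))
            (fun j => (1 / ((N : ℝ) * p j)) ^ β)))
    (η : ℝ)
    (hη : η = (Finset.univ.inf' (Finset.univ_nonempty_iff.mpr (Fin.pos_iff_nonempty.mp hN))
        (fun j => |δ j| ^ (α * β))) / ∑ j, |δ j| ^ α) :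
    (∑ i, w i * p i * (Real.sign (δ i) * |δ i| ^ (τ - 1))
        = η * ∑ i, Real.sign (δ i) * |δ i| ^ (τ + α - α * β - 1))
    ∧ ((1 / (N : ℝ)) * ∑ i, η * (N : ℝ) * (Real.sign (δ i) * |δ i| ^ (τ + α - α * β - 1))
        = η * ∑ i, Real.sign (δ i) * |δ i| ^ (τ + α - α * β - 1)) :=
  stmt4_general N hN δ hδ τ α β p w hp hw η hη
end

section
/- The generalized PAL loss with Huber threshold κ, L(δ) = (1/λ)·(0.5κ^α δ² if |δ| ≤ κ, else κ|δ|^{1+α}/(1+α)), has derivative (1/λ)·max(|δ|^α, κ^α)·hubergrad_κ(δ) for δ ≠ 0, |δ| ≠ κ, where hubergrad_κ(δ) = δ for |δ| ≤ κ and κ·sign(δ) otherwise. -/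
/-! Away from the kink `|δ| = κ` the loss coincides near `δ` with one of its two branches.
On `|δ| < κ` the quadratic branch has derivative `κ^α δ` and the priority
`max (|δ|^α) (κ^α)` is `κ^α`; on `κ < |δ|` the power branch has derivative
`κ |δ|^α sign δ` and the priority is `|δ|^α`. In both cases the derivative is
the priority times the Huber gradient. -/

open Topology

theorem Real.sign_eq_signType_sign (x : ℝ) : Real.sign x = (SignType.sign x : ℝ) := by
  rcases lt_trichotomy x 0 with h | rfl | h <;> simp [Real.sign_of_neg, Real.sign_of_pos, *]

theorem hasDerivAt_abs_rpow_of_ne_zero (p : ℝ) {x : ℝ} (hx : x ≠ 0) :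
    HasDerivAt (fun y => |y| ^ p) (p * |x| ^ (p - 1) * Real.sign x) x := by
  rw [Real.sign_eq_signType_sign]
  convert (hasDerivAt_abs hx).rpow_const (p := p) (Or.inl (abs_ne_zero.mpr hx)) using 1
  ring

noncomputable def palLoss (α κ x : ℝ) : ℝ :=
  if |x| ≤ κ then 0.5 * κ ^ α * x ^ 2 else κ * |x| ^ (1 + α) / (1 + α)

noncomputable def huberGrad (κ x : ℝ) : ℝ :=
  if |x| ≤ κ then x else κ * Real.sign x

theorem hasDerivAt_palLoss_of_abs_lt (α : ℝ) {κ x : ℝ} (hx : |x| < κ) :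
    HasDerivAt (palLoss α κ) (κ ^ α * x) x := by
  have hquadratic : palLoss α κ =ᶠ[𝓝 x] fun y => 0.5 * κ ^ α * y ^ 2 := by
    filter_upwards [(isOpen_lt continuous_abs continuous_const).mem_nhds hx] with y hy
    exact if_pos hy.le
  refine HasDerivAt.congr_of_eventuallyEq ?_ hquadratic
  exact ((hasDerivAt_pow 2 x).const_mul (0.5 * κ ^ α)).congr_deriv (by ring)

theorem hasDerivAt_palLoss_of_lt_abs {α κ x : ℝ} (hα : 1 + α ≠ 0) (hκ : 0 ≤ κ)
    (hx : κ < |x|) :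
    HasDerivAt (palLoss α κ) (κ * |x| ^ α * Real.sign x) x := by
  have hpower : palLoss α κ =ᶠ[𝓝 x] fun y => κ * |y| ^ (1 + α) / (1 + α) := by
    filter_upwards [(isOpen_lt continuous_const continuous_abs).mem_nhds hx] with y hy
    exact if_neg hy.not_ge
  have hx0 : x ≠ 0 := abs_pos.mp (hκ.trans_lt hx)
  refine HasDerivAt.congr_of_eventuallyEq ?_ hpower
  refine (((hasDerivAt_abs_rpow_of_ne_zero (1 + α) hx0).const_mul κ).div_const
    (1 + α)).congr_deriv ?_
  rw [add_sub_cancel_left]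
  field_simp

theorem hasDerivAt_palLoss {α κ x : ℝ} (hα : 0 ≤ α) (hκ : 0 ≤ κ) (hx : |x| ≠ κ) :
    HasDerivAt (palLoss α κ) (max (|x| ^ α) (κ ^ α) * huberGrad κ x) x := by
  rcases hx.lt_or_gt with hlt | hgt
  · rw [max_eq_right (Real.rpow_le_rpow (abs_nonneg x) hlt.le hα), huberGrad, if_pos hlt.le]
    exact hasDerivAt_palLoss_of_abs_lt α hlt
  · rw [max_eq_left (Real.rpow_le_rpow hκ hgt.le hα), huberGrad, if_neg hgt.not_ge]
    exact (hasDerivAt_palLoss_of_lt_abs (by linarith) hκ hgt).congr_deriv (by ring)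

theorem stmt18_general (α κ lam : ℝ) (hα : 0 < α) (hκ : 0 < κ)
    (L : ℝ → ℝ)
    (hL : ∀ x : ℝ, L x = (1 / lam) *
        (if |x| ≤ κ then 0.5 * κ ^ α * x ^ 2 else κ * |x| ^ (1 + α) / (1 + α)))
    (δ : ℝ) (hδκ : |δ| ≠ κ) :
    HasDerivAt L
      ((1 / lam) * max (|δ| ^ α) (κ ^ α) * (if |δ| ≤ κ then δ else κ * Real.sign δ)) δ := by
  have hL' : L = fun x => (1 / lam) * palLoss α κ x := funext hL
  rw [hL', mul_assoc]
  exact (hasDerivAt_palLoss hα.le hκ.le hδκ).const_mul (1 / lam)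

theorem stmt18 (α κ lam : ℝ) (hα : 0 < α) (hκ : 0 < κ) (hlam : 0 < lam)
    (L : ℝ → ℝ)
    (hL : ∀ x : ℝ, L x = (1 / lam) *
        (if |x| ≤ κ then 0.5 * κ ^ α * x ^ 2 else κ * |x| ^ (1 + α) / (1 + α)))
    (δ : ℝ) (hδ0 : δ ≠ 0) (hδκ : |δ| ≠ κ) :
    HasDerivAt L
      ((1 / lam) * max (|δ| ^ α) (κ ^ α) * (if |δ| ≤ κ then δ else κ * Real.sign δ)) δ :=
  stmt18_general α κ lam hα hκ L hL δ hδκ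
end
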